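/- arXiv:1104.4302 — 3 statements merged into one kernel-verified Lean document; each statement's English description precedes it below -/
import Mathlib

section
/- Let (Ω, ℱ, Q) be a probability space and let B_1, …, B_M ∈ ℱ be finitely many events. Then Q(∪_{m=1}^M B_m) ≥ Σ_{m=1}^M Q(B_m)² / ( Σ_{m′=1}^M Q(B_m ∩ B_{m′}) ), where any summand whose denominator is zero (equivalently, with Q(B_m) = 0) is interpreted as 0. -/
open MeasureTheory ENNReal
open scoped ENNReal

/-- de Caen's inequality: for events `B_1, …, B_M` in a probability space,
`Q(⋃ B_m) ≥ Σ_m Q(B_m)² / (Σ_{m'} Q(B_m ∩ B_{m'}))` (summands with zero denominator are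
zero, since then `Q(B_m) = 0` and `0/0 = 0` in `ℝ≥0∞`). -/
theorem stmt_4 {Ω : Type*} [MeasurableSpace Ω] (Q : Measure Ω) [IsProbabilityMeasure Q]
    (M : ℕ) (B : Fin M → Set Ω) (hB : ∀ m, MeasurableSet (B m)) :
    ∑ m, Q (B m) ^ 2 / (∑ m', Q (B m ∩ B m')) ≤ Q (⋃ m, B m) := by
  classical
  set f : Ω → ℝ≥0∞ := fun ω => ∑ m', (B m').indicator 1 ω with hf
  have hfmeas : Measurable f := by
    apply Finset.measurable_sum
    intro m' _
    exact (measurable_const.indicator (hB m'))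
  have hfinv : Measurable fun ω => (f ω)⁻¹ := hfmeas.inv
  -- on B m, f ω ≥ 1 and f ω ≤ M
  have hflt : ∀ ω, f ω ≠ ⊤ := fun ω =>
    (ENNReal.sum_lt_top.mpr fun m' _ => lt_of_le_of_lt
      (Set.indicator_le_self' (fun _ _ => zero_le_one) ω) ENNReal.one_lt_top).ne
  have hfpos : ∀ m, ∀ ω ∈ B m, f ω ≠ 0 := by
    intro m ω hω
    have : (B m).indicator (1 : Ω → ℝ≥0∞) ω = 1 := by simp [Set.indicator_of_mem hω]
    intro h0
    have := Finset.sum_eq_zero_iff.mp h0 m (Finset.mem_univ m)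
    simp [Set.indicator_of_mem hω] at this
  -- step 1: denominator
  have hden : ∀ m, ∫⁻ ω, f ω ∂(Q.restrict (B m)) = ∑ m', Q (B m ∩ B m') := by
    intro m
    simp only [hf]
    rw [lintegral_finset_sum (f := fun m' => (B m').indicator 1) _ (fun m' _ => measurable_const.indicator (hB m'))]
    refine Finset.sum_congr rfl fun m' _ => ?_
    rw [lintegral_indicator_one (hB m'), Measure.restrict_apply (hB m'), Set.inter_comm]
  -- step 3: Cauchy-Schwarz
  have hCS : ∀ m, Q (B m) ^ 2 ≤
      (∫⁻ ω, (f ω)⁻¹ ∂(Q.restrict (B m))) * (∑ m', Q (B m ∩ B m')) := by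
    intro m
    rw [← hden m]
    set μ := Q.restrict (B m)
    have h1 : Q (B m) = ∫⁻ ω, ((fun ω => f ω ^ (1/2 : ℝ)) * fun ω => (f ω)⁻¹ ^ (1/2 : ℝ)) ω ∂μ := by
      have : ∀ᵐ ω ∂μ, ((fun ω => f ω ^ (1/2 : ℝ)) * fun ω => (f ω)⁻¹ ^ (1/2 : ℝ)) ω = 1 := by
        filter_upwards [ae_restrict_mem (hB m)] with ω hω
        have h0 := hfpos m ω hω
        have ht := hflt ω
        simp only [Pi.mul_apply, ← ENNReal.inv_rpow]
        rw [← ENNReal.mul_rpow_of_ne_top ht (by simp [h0]), ENNReal.mul_inv_cancel h0 ht,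
          ENNReal.one_rpow]
      rw [lintegral_congr_ae this, lintegral_one, Measure.restrict_apply_univ]
    have hCS' := ENNReal.lintegral_mul_le_Lp_mul_Lq μ ((by constructor <;> norm_num) : (2:ℝ).HolderConjugate 2)
      (f := fun ω => f ω ^ (1/2 : ℝ)) (g := fun ω => (f ω)⁻¹ ^ (1/2 : ℝ))
      ((hfmeas.pow measurable_const).aemeasurable) ((hfinv.pow measurable_const).aemeasurable)
    rw [← h1] at hCS'
    have hsimp : ∀ x : ℝ≥0∞, (x ^ (1/2 : ℝ)) ^ (2 : ℝ) = x := by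
      intro x
      rw [← ENNReal.rpow_mul]
      norm_num
    simp only [hsimp] at hCS'
    calc Q (B m) ^ 2 ≤ ((∫⁻ a, f a ∂μ) ^ (1/2:ℝ) * (∫⁻ a, (f a)⁻¹ ∂μ) ^ (1/2:ℝ)) ^ 2 := by
          exact pow_le_pow_left' hCS' 2
      _ = (∫⁻ ω, (f ω)⁻¹ ∂μ) * (∫⁻ a, f a ∂μ) := by
          rw [mul_pow, ← ENNReal.rpow_natCast ((∫⁻ a, f a ∂μ) ^ (1/2:ℝ)) 2,
            ← ENNReal.rpow_natCast ((∫⁻ a, (f a)⁻¹ ∂μ) ^ (1/2:ℝ)) 2,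
            ← ENNReal.rpow_mul, ← ENNReal.rpow_mul]
          norm_num [mul_comm]
  -- combine
  calc ∑ m, Q (B m) ^ 2 / (∑ m', Q (B m ∩ B m'))
      ≤ ∑ m, ∫⁻ ω, (f ω)⁻¹ ∂(Q.restrict (B m)) := by
        refine Finset.sum_le_sum fun m _ => ?_
        exact ENNReal.div_le_of_le_mul (hCS m)
    _ = ∫⁻ ω, ∑ m, (B m).indicator (fun ω => (f ω)⁻¹) ω ∂Q := by
        rw [lintegral_finset_sum _ (fun m _ => hfinv.indicator (hB m))]
        refine Finset.sum_congr rfl fun m _ => ?_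
        rw [lintegral_indicator (hB m)]
    _ ≤ ∫⁻ ω, (⋃ m, B m).indicator 1 ω ∂Q := by
        refine lintegral_mono fun ω => ?_
        by_cases hω : ω ∈ ⋃ m, B m
        · rw [Set.indicator_of_mem hω]
          have : ∑ m, (B m).indicator (fun ω => (f ω)⁻¹) ω
              = f ω * (f ω)⁻¹ := by
            rw [hf, Finset.sum_mul]
            refine Finset.sum_congr rfl fun m _ => ?_
            by_cases h : ω ∈ B m <;> simp [Set.indicator_of_mem, Set.indicator_of_notMem, h]
          rw [this]
          rw [ENNReal.mul_inv_cancel (by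
            obtain ⟨_, ⟨m, rfl⟩, hm⟩ := hω
            exact hfpos m ω hm) (hflt ω)]
          rfl
        · have hnot : ∀ m, ω ∉ B m := by
            intro m hm; exact hω (Set.mem_iUnion.mpr ⟨m, hm⟩)
          simp [Set.indicator_of_notMem, hnot, hω]
    _ = Q (⋃ m, B m) := lintegral_indicator_one (MeasurableSet.iUnion fun m => hB m)
end

section
/- Let q be a prime power, n, k ≥ 1, and let X ∈ F_q^{n×n} be a fixed matrix. Let N := #{ Z ∈ F_q^{n×n} : Z ≠ X and rank(Z) ≤ rank(X) }. Under the uniform measurement model, the min-rank decoding error event E satisfies P(E) ≥ N·q^{−k} / ( (q−1) + N·q^{−k} ). -/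
open Finset

section Aux
variable {n : ℕ} {F : Type} [Field F]

def phiL (C : Matrix (Fin n) (Fin n) F) : Matrix (Fin n) (Fin n) F →ₗ[F] F where
  toFun m := ∑ i, ∑ j, m i j * C i j
  map_add' := by
    intro x y
    simp [Matrix.add_apply, add_mul, Finset.sum_add_distrib]
  map_smul' := by
    intro c x
    simp [Matrix.smul_apply, smul_eq_mul, mul_assoc, Finset.mul_sum]

lemma phiL_std (C : Matrix (Fin n) (Fin n) F) (i j : Fin n) (x : F) :
    phiL C (Matrix.single i j x) = x * C i j := by
  simp only [phiL, LinearMap.coe_mk, AddHom.coe_mk]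
  rw [Finset.sum_eq_single i, Finset.sum_eq_single j]
  · simp [Matrix.single]
  · intro b _ hb; simp [Matrix.single, hb.symm]
  · simp
  · intro b _ hb
    apply Finset.sum_eq_zero
    intro j' _
    simp [Matrix.single, hb.symm]
  · simp

lemma phiL_sub_eq_zero (Z X m : Matrix (Fin n) (Fin n) F) :
    phiL (Z - X) m = 0 ↔ (∑ i, ∑ j, m i j * Z i j) = ∑ i, ∑ j, m i j * X i j := by
  simp only [phiL, LinearMap.coe_mk, AddHom.coe_mk, Matrix.sub_apply, mul_sub,
    Finset.sum_sub_distrib]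
  exact sub_eq_zero

lemma exists_phiL_one {C : Matrix (Fin n) (Fin n) F} (hC : C ≠ 0) :
    ∃ m, phiL C m = 1 := by
  have : ∃ i j, C i j ≠ 0 := by
    by_contra h
    push_neg at h
    exact hC (by ext i j; simp [h])
  obtain ⟨i, j, hij⟩ := this
  exact ⟨Matrix.single i j (C i j)⁻¹, by rw [phiL_std, inv_mul_cancel₀ hij]⟩

lemma surj_single {C : Matrix (Fin n) (Fin n) F} (hC : C ≠ 0) :
    Function.Surjective (phiL C) := by
  obtain ⟨m, hm⟩ := exists_phiL_one hC
  intro c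
  exact ⟨c • m, by rw [map_smul, hm, smul_eq_mul, mul_one]⟩

lemma surj_pair {D D' : Matrix (Fin n) (Fin n) F} (hD : D ≠ 0)
    (h : ¬ ∃ c : F, D' = c • D) :
    Function.Surjective ((phiL D).prod (phiL D')) := by
  obtain ⟨m₀, hm₀⟩ := exists_phiL_one hD
  have key : ∃ m, phiL D m = 0 ∧ phiL D' m ≠ 0 := by
    by_contra hc
    push_neg at hc
    apply h
    refine ⟨phiL D' m₀, ?_⟩
    have hall : ∀ m, phiL D' m = phiL D' m₀ * phiL D m := by
      intro m
      have h0 : phiL D (m - (phiL D m) • m₀) = 0 := by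
        rw [map_sub, map_smul, hm₀, smul_eq_mul, mul_one, sub_self]
      have := hc _ h0
      rw [map_sub, map_smul, sub_eq_zero, smul_eq_mul] at this
      rw [this, mul_comm]
    ext i j
    have := hall (Matrix.single i j 1)
    rw [phiL_std, phiL_std, one_mul, one_mul] at this
    simpa [mul_comm] using this
  obtain ⟨m, hm0, hmne⟩ := key
  set m₁ := (phiL D' m)⁻¹ • m with hm₁
  have h1 : phiL D m₁ = 0 := by rw [hm₁, map_smul, hm0, smul_zero]
  have h2 : phiL D' m₁ = 1 := by rw [hm₁, map_smul, smul_eq_mul, inv_mul_cancel₀ hmne]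
  intro ⟨a, b⟩
  refine ⟨a • m₀ + (b - a * phiL D' m₀) • m₁, ?_⟩
  simp only [LinearMap.prod_apply, Function.prod, map_add, map_smul, hm₀, h1, h2, Prod.smul_mk, Prod.mk_add_mk, smul_eq_mul,
    mul_one, mul_zero, Prod.mk.injEq]
  exact ⟨by ring, by ring⟩

lemma card_ker_mul {V W : Type} [AddCommGroup V] [AddCommGroup W] [Fintype V] [Fintype W]
    (φ : V →+ W) (hs : Function.Surjective φ) :
    Nat.card {v : V // φ v = 0} * Nat.card W = Nat.card V := by
  have h1 : Nat.card V = Nat.card (V ⧸ φ.ker) * Nat.card φ.ker :=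
    AddSubgroup.card_eq_card_quotient_mul_card_addSubgroup _
  have h2 : Nat.card (V ⧸ φ.ker) = Nat.card W :=
    Nat.card_congr (QuotientAddGroup.quotientKerEquivOfSurjective φ hs).toEquiv
  have h3 : Nat.card {v : V // φ v = 0} = Nat.card φ.ker := by
    apply Nat.card_congr
    exact Equiv.subtypeEquivRight (fun v => AddMonoidHom.mem_ker.symm)
  rw [h3, h1, h2, mul_comm]

variable [Fintype F]

lemma card_single {C : Matrix (Fin n) (Fin n) F} (hC : C ≠ 0) :
    Nat.card {m : Matrix (Fin n) (Fin n) F // phiL C m = 0} * Fintype.card F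
      = Fintype.card (Matrix (Fin n) (Fin n) F) := by
  have := card_ker_mul (phiL C).toAddMonoidHom (surj_single hC)
  simpa [Nat.card_eq_fintype_card] using this

lemma card_pair {D D' : Matrix (Fin n) (Fin n) F} (hD : D ≠ 0)
    (h : ¬ ∃ c : F, D' = c • D) :
    Nat.card {m : Matrix (Fin n) (Fin n) F // phiL D m = 0 ∧ phiL D' m = 0}
      * Fintype.card F ^ 2 = Fintype.card (Matrix (Fin n) (Fin n) F) := by
  have := card_ker_mul ((phiL D).prod (phiL D')).toAddMonoidHom (surj_pair hD h)
  have hcongr : Nat.card {m : Matrix (Fin n) (Fin n) F //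
      ((phiL D).prod (phiL D')).toAddMonoidHom m = 0}
      = Nat.card {m : Matrix (Fin n) (Fin n) F // phiL D m = 0 ∧ phiL D' m = 0} := by
    apply Nat.card_congr
    apply Equiv.subtypeEquivRight
    intro m
    simp [LinearMap.prod_apply, Pi.prod, Prod.ext_iff]
  rw [hcongr] at this
  have hFF : Nat.card (F × F) = Fintype.card F ^ 2 := by
    simp [Nat.card_eq_fintype_card, sq]
  rw [hFF] at this
  simpa [Nat.card_eq_fintype_card] using this

lemma pi_count {k : ℕ} {M : Type} [Fintype M] (p : M → Prop) :
    Nat.card {H : Fin k → M // ∀ a, p (H a)} = Nat.card {m : M // p m} ^ k := by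
  rw [Nat.card_congr (Equiv.subtypePiEquivPi (p := fun _ => p)), Nat.card_pi]
  simp

end Aux

lemma final_real (q k N Om E : ℕ) (hq2 : 2 ≤ q) (hOmpos : 0 < Om)
    (main : N * Om ≤ E * ((q - 1) * q ^ k + N)) :
    ((N:ℝ) * (q:ℝ) ^ (-(k:ℤ))) / (((q:ℝ) - 1) + (N:ℝ) * (q:ℝ) ^ (-(k:ℤ)))
      ≤ (E:ℝ) / (Om:ℝ) := by
  have hqk_pos : (0:ℝ) < (q:ℝ) ^ k := by positivity
  have hc : (q:ℝ) ^ (-(k:ℤ)) = ((q:ℝ) ^ k)⁻¹ := by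
    rw [zpow_neg, zpow_natCast]
  have hq1 : ((q - 1 : ℕ) : ℝ) = (q:ℝ) - 1 := by
    rw [Nat.cast_sub (by omega : 1 ≤ q), Nat.cast_one]
  have mainR : (N:ℝ) * Om ≤ (E:ℝ) * (((q:ℝ) - 1) * (q:ℝ) ^ k + N) := by
    have h := (Nat.cast_le (α := ℝ)).mpr main
    push_cast at h
    rw [hq1] at h
    exact_mod_cast h
  have hOmR : (0:ℝ) < (Om:ℝ) := by exact_mod_cast hOmpos
  have hden : (0:ℝ) < ((q:ℝ) - 1) + (N:ℝ) * (q:ℝ) ^ (-(k:ℤ)) := by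
    have h1 : (2:ℝ) ≤ (q:ℝ) := by exact_mod_cast hq2
    have h2 : (0:ℝ) ≤ (N:ℝ) * (q:ℝ) ^ (-(k:ℤ)) := by
      rw [hc]; positivity
    linarith
  rw [div_le_div_iff₀ hden hOmR, hc]
  have hkey : ((q:ℝ) - 1) + (N:ℝ) * ((q:ℝ) ^ k)⁻¹
      = (((q:ℝ) - 1) * (q:ℝ) ^ k + N) * ((q:ℝ) ^ k)⁻¹ := by
    field_simp
  rw [hkey]
  calc (N:ℝ) * ((q:ℝ) ^ k)⁻¹ * Om = ((N:ℝ) * Om) * ((q:ℝ) ^ k)⁻¹ := by ring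
    _ ≤ ((E:ℝ) * (((q:ℝ) - 1) * (q:ℝ) ^ k + N)) * ((q:ℝ) ^ k)⁻¹ :=
        mul_le_mul_of_nonneg_right mainR (by positivity)
    _ = (E:ℝ) * ((((q:ℝ) - 1) * (q:ℝ) ^ k + N) * ((q:ℝ) ^ k)⁻¹) := by ring

/-- de Caen-type lower bound on the min-rank decoding error probability under
the uniform measurement model: `P(E) ≥ N q^{-k} / ((q-1) + N q^{-k})` where `N` is the
number of matrices `Z ≠ X` with `rank Z ≤ rank X`. -/
theorem stmt_5 (q n k : ℕ) (hq : IsPrimePow q) (hn : 0 < n) (hk : 0 < k)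
    (F : Type) [Field F] [Fintype F] (hF : Fintype.card F = q)
    (X : Matrix (Fin n) (Fin n) F) :
    ((Nat.card {Z : Matrix (Fin n) (Fin n) F // Z ≠ X ∧ Z.rank ≤ X.rank} : ℝ) *
        (q : ℝ) ^ (-(k : ℤ))) /
      (((q : ℝ) - 1) +
        (Nat.card {Z : Matrix (Fin n) (Fin n) F // Z ≠ X ∧ Z.rank ≤ X.rank} : ℝ) *
          (q : ℝ) ^ (-(k : ℤ)))
    ≤ (Nat.card {H : Fin k → Matrix (Fin n) (Fin n) F //
          ∃ Z : Matrix (Fin n) (Fin n) F, Z ≠ X ∧ Z.rank ≤ X.rank ∧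
            ∀ a, (∑ i, ∑ j, H a i j * Z i j) = ∑ i, ∑ j, H a i j * X i j} : ℝ) /
        (Fintype.card (Fin k → Matrix (Fin n) (Fin n) F) : ℝ) := by
  classical
  have hq2 : 2 ≤ q := hq.two_le
  set S : Finset (Matrix (Fin n) (Fin n) F) := univ.filter (fun Z => Z ≠ X ∧ Z.rank ≤ X.rank) with hS
  set N := S.card with hNdef
  have hN : Nat.card {Z : (Matrix (Fin n) (Fin n) F) // Z ≠ X ∧ Z.rank ≤ X.rank} = N := by
    rw [Nat.card_eq_fintype_card]
    convert Fintype.card_subtype (fun Z : (Matrix (Fin n) (Fin n) F) => Z ≠ X ∧ Z.rank ≤ X.rank)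
  set Ω := Fintype.card (Fin k → (Matrix (Fin n) (Fin n) F)) with hΩdef
  set mM := Fintype.card (Matrix (Fin n) (Fin n) F) with hmM
  have hΩ : Ω = mM ^ k := by
    rw [hΩdef, hmM]; simp
  have hΩpos : 0 < Ω := Fintype.card_pos
  have hqpos : 0 < q := by omega
  set p : (Matrix (Fin n) (Fin n) F) → (Fin k → (Matrix (Fin n) (Fin n) F)) → Prop := fun Z H => ∀ a, phiL (Z - X) (H a) = 0 with hp
  set f : (Fin k → (Matrix (Fin n) (Fin n) F)) → ℕ := fun H => (S.filter (fun Z => p Z H)).card with hf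
  -- membership in S
  have hmemS : ∀ Z : (Matrix (Fin n) (Fin n) F), Z ∈ S ↔ (Z ≠ X ∧ Z.rank ≤ X.rank) := by
    intro Z; rw [hS, mem_filter]; simp
  -- (A) per-Z count
  have hA : ∀ Z ∈ S, (univ.filter (fun H : Fin k → (Matrix (Fin n) (Fin n) F) => p Z H)).card * q ^ k = Ω := by
    intro Z hZ
    have hD : Z - X ≠ 0 := sub_ne_zero.mpr ((hmemS Z).mp hZ).1
    have h1 := card_single hD
    have h2 : (univ.filter (fun H : Fin k → (Matrix (Fin n) (Fin n) F) => p Z H)).card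
        = Nat.card {m : (Matrix (Fin n) (Fin n) F) // phiL (Z - X) m = 0} ^ k := by
      rw [← pi_count, Nat.card_eq_fintype_card]
      exact (Fintype.card_subtype _).symm
    rw [h2, hΩ, ← hF] at *
    rw [← mul_pow, h1]
  -- (A') total first moment
  have hSf : (∑ H : Fin k → (Matrix (Fin n) (Fin n) F), f H) * q ^ k = N * Ω := by
    have hswap : ∑ H : Fin k → (Matrix (Fin n) (Fin n) F), f H
        = ∑ Z ∈ S, (univ.filter (fun H : Fin k → (Matrix (Fin n) (Fin n) F) => p Z H)).card := by
      simp only [hf, card_filter]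
      rw [← Finset.sum_comm]
    rw [hswap, Finset.sum_mul, Finset.sum_congr rfl hA, Finset.sum_const, smul_eq_mul]
  -- pair counts
  set cnt : (Matrix (Fin n) (Fin n) F) → (Matrix (Fin n) (Fin n) F) → ℕ :=
    fun Z Z' => (univ.filter (fun H : Fin k → (Matrix (Fin n) (Fin n) F) => p Z H ∧ p Z' H)).card with hcnt
  have hpair : ∀ Z ∈ S, ∀ Z' ∈ S, (¬ ∃ c : F, Z' - X = c • (Z - X)) →
      cnt Z Z' * (q ^ k) ^ 2 = Ω := by
    intro Z hZ Z' hZ' hnc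
    have hD : Z - X ≠ 0 := sub_ne_zero.mpr ((hmemS Z).mp hZ).1
    have h1 := card_pair hD hnc
    have h2 : cnt Z Z' = Nat.card {m : (Matrix (Fin n) (Fin n) F) // phiL (Z - X) m = 0 ∧ phiL (Z' - X) m = 0} ^ k := by
      have e1 : cnt Z Z'
          = Nat.card {H : Fin k → (Matrix (Fin n) (Fin n) F) // ∀ a, phiL (Z - X) (H a) = 0 ∧ phiL (Z' - X) (H a) = 0} := by
        simp only [hcnt]
        rw [Nat.card_eq_fintype_card, ← Fintype.card_subtype]
        apply Fintype.card_congr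
        apply Equiv.subtypeEquivRight
        intro H
        simp only [hp]
        constructor
        · rintro ⟨ha, hb⟩ a; exact ⟨ha a, hb a⟩
        · intro h; exact ⟨fun a => (h a).1, fun a => (h a).2⟩
      rw [e1, pi_count (p := fun m : (Matrix (Fin n) (Fin n) F) => phiL (Z - X) m = 0 ∧ phiL (Z' - X) m = 0)]
    have hsw : (Fintype.card F ^ k) ^ 2 = (Fintype.card F ^ 2) ^ k := by ring
    rw [h2, hΩ, ← hF, hsw, ← mul_pow, h1]
  -- second moment expansion
  have hQexp : ∑ H : Fin k → (Matrix (Fin n) (Fin n) F), (f H) ^ 2 = ∑ Z ∈ S, ∑ Z' ∈ S, cnt Z Z' := by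
    have e1 : ∀ H, (f H) ^ 2 = ∑ Z ∈ S, ∑ Z' ∈ S,
        (if p Z H ∧ p Z' H then 1 else 0) := by
      intro H
      rw [hf, sq]
      simp only [card_filter]
      rw [Finset.sum_mul_sum]
      refine Finset.sum_congr rfl (fun Z _ => Finset.sum_congr rfl (fun Z' _ => ?_))
      split_ifs <;> tauto
    calc ∑ H : Fin k → (Matrix (Fin n) (Fin n) F), (f H) ^ 2
        = ∑ H : Fin k → (Matrix (Fin n) (Fin n) F), ∑ Z ∈ S, ∑ Z' ∈ S,
            (if p Z H ∧ p Z' H then 1 else 0) := Finset.sum_congr rfl (fun H _ => e1 H)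
      _ = ∑ Z ∈ S, ∑ H : Fin k → (Matrix (Fin n) (Fin n) F), ∑ Z' ∈ S,
            (if p Z H ∧ p Z' H then 1 else 0) := Finset.sum_comm
      _ = ∑ Z ∈ S, ∑ Z' ∈ S, ∑ H : Fin k → (Matrix (Fin n) (Fin n) F),
            (if p Z H ∧ p Z' H then 1 else 0) :=
          Finset.sum_congr rfl (fun Z _ => Finset.sum_comm)
      _ = ∑ Z ∈ S, ∑ Z' ∈ S, cnt Z Z' :=
          Finset.sum_congr rfl (fun Z _ => Finset.sum_congr rfl
            (fun Z' _ => (Finset.card_filter _ _).symm))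
  -- per-Z bound on pair sums
  have hrow : ∀ Z ∈ S, (∑ Z' ∈ S, cnt Z Z') * (q ^ k) ^ 2
      ≤ (q - 1) * (Ω * q ^ k) + N * Ω := by
    intro Z hZ
    have hD : Z - X ≠ 0 := sub_ne_zero.mpr ((hmemS Z).mp hZ).1
    set T : (Matrix (Fin n) (Fin n) F) → Prop := fun Z' => ∃ c : F, Z' - X = c • (Z - X) with hT
    have hTcard : (S.filter T).card ≤ q - 1 := by
      have himg : (univ.filter (fun c : F => c ≠ 0)).card = q - 1 := by
        rw [Finset.filter_ne', Finset.card_erase_of_mem (mem_univ 0), card_univ, hF]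
      rw [← himg]
      apply Finset.card_le_card_of_injOn
        (fun Z' => if h : T Z' then h.choose else 0)
      · intro Z' hZ'
        obtain ⟨hZS, hT'⟩ := mem_filter.mp hZ'
        simp only [mem_coe, mem_filter, mem_univ, true_and, dif_pos hT']
        intro hc0
        have hspec := hT'.choose_spec
        rw [hc0, zero_smul, sub_eq_zero] at hspec
        exact ((hmemS Z').mp hZS).1 hspec
      · intro a ha b hb hab
        obtain ⟨_, hTa⟩ := mem_filter.mp (mem_coe.mp ha)
        obtain ⟨_, hTb⟩ := mem_filter.mp (mem_coe.mp hb)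
        simp only [dif_pos hTa, dif_pos hTb] at hab
        have : a - X = b - X := by rw [hTa.choose_spec, hab, ← hTb.choose_spec]
        exact sub_left_injective this
    have hbound1 : ∀ Z' ∈ S.filter T, cnt Z Z' * (q ^ k) ^ 2 ≤ Ω * q ^ k := by
      intro Z' hZ'
      have hle : cnt Z Z' ≤ (univ.filter (fun H : Fin k → (Matrix (Fin n) (Fin n) F) => p Z H)).card := by
        apply Finset.card_le_card
        intro H hH
        simp only [mem_filter] at hH ⊢
        exact ⟨hH.1, hH.2.1⟩
      calc cnt Z Z' * (q ^ k) ^ 2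
          ≤ (univ.filter (fun H : Fin k → (Matrix (Fin n) (Fin n) F) => p Z H)).card * (q ^ k) ^ 2 := by
            exact Nat.mul_le_mul_right _ hle
        _ = ((univ.filter (fun H : Fin k → (Matrix (Fin n) (Fin n) F) => p Z H)).card * q ^ k) * q ^ k := by ring
        _ = Ω * q ^ k := congrArg (fun t => t * q ^ k) (hA Z hZ)
    have hbound2 : ∀ Z' ∈ S.filter (fun Z' => ¬ T Z'), cnt Z Z' * (q ^ k) ^ 2 = Ω := by
      intro Z' hZ'
      obtain ⟨hZS', hnT⟩ := mem_filter.mp hZ'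
      exact hpair Z hZ Z' hZS' hnT
    calc (∑ Z' ∈ S, cnt Z Z') * (q ^ k) ^ 2
        = ∑ Z' ∈ S, cnt Z Z' * (q ^ k) ^ 2 := by rw [Finset.sum_mul]
      _ = (∑ Z' ∈ S.filter T, cnt Z Z' * (q ^ k) ^ 2)
          + ∑ Z' ∈ S.filter (fun Z' => ¬ T Z'), cnt Z Z' * (q ^ k) ^ 2 := by
            rw [Finset.sum_filter_add_sum_filter_not]
      _ ≤ (S.filter T).card * (Ω * q ^ k) + (S.filter (fun Z' => ¬ T Z')).card * Ω := by
            apply Nat.add_le_add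
            · calc ∑ Z' ∈ S.filter T, cnt Z Z' * (q ^ k) ^ 2
                  ≤ ∑ _Z' ∈ S.filter T, Ω * q ^ k := Finset.sum_le_sum hbound1
                _ = (S.filter T).card * (Ω * q ^ k) := by rw [Finset.sum_const, smul_eq_mul]
            · apply le_of_eq
              calc ∑ Z' ∈ S.filter (fun Z' => ¬ T Z'), cnt Z Z' * (q ^ k) ^ 2
                  = ∑ _Z' ∈ S.filter (fun Z' => ¬ T Z'), Ω := Finset.sum_congr rfl hbound2
                _ = (S.filter (fun Z' => ¬ T Z')).card * Ω := by
                    rw [Finset.sum_const, smul_eq_mul]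
      _ ≤ (q - 1) * (Ω * q ^ k) + N * Ω := by
            apply Nat.add_le_add
            · exact Nat.mul_le_mul_right _ hTcard
            · refine Nat.mul_le_mul_right _ ?_
              rw [hNdef]
              exact Finset.card_filter_le _ _
  -- (B) second moment bound
  have hQ : (∑ H : Fin k → (Matrix (Fin n) (Fin n) F), (f H) ^ 2) * (q ^ k) ^ 2
      ≤ N * ((q - 1) * (Ω * q ^ k) + N * Ω) := by
    rw [hQexp, Finset.sum_mul]
    calc ∑ Z ∈ S, (∑ Z' ∈ S, cnt Z Z') * (q ^ k) ^ 2
        ≤ ∑ _Z ∈ S, ((q - 1) * (Ω * q ^ k) + N * Ω) := Finset.sum_le_sum hrow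
      _ = N * ((q - 1) * (Ω * q ^ k) + N * Ω) := by rw [Finset.sum_const, smul_eq_mul]
  -- event set
  set Efin : Finset (Fin k → (Matrix (Fin n) (Fin n) F)) := univ.filter (fun H => 0 < f H) with hEfin
  set E := Efin.card with hEdef
  have hE : Nat.card {H : Fin k → (Matrix (Fin n) (Fin n) F) //
      ∃ Z : (Matrix (Fin n) (Fin n) F), Z ≠ X ∧ Z.rank ≤ X.rank ∧
        ∀ a, (∑ i, ∑ j, H a i j * Z i j) = ∑ i, ∑ j, H a i j * X i j} = E := by
    rw [Nat.card_eq_fintype_card, hEdef, hEfin]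
    rw [← Fintype.card_subtype]
    apply Fintype.card_congr
    apply Equiv.subtypeEquivRight
    intro H
    rw [hf]
    simp only [Finset.card_pos, Finset.filter_nonempty_iff]
    constructor
    · rintro ⟨Z, h1, h2, h3⟩
      refine ⟨Z, (hmemS Z).mpr ⟨h1, h2⟩, ?_⟩
      rw [hp]
      intro a
      rw [phiL_sub_eq_zero]
      exact h3 a
    · rintro ⟨Z, hZS, hPZ⟩
      obtain ⟨h1, h2⟩ := (hmemS Z).mp hZS
      refine ⟨Z, h1, h2, ?_⟩
      intro a
      rw [← phiL_sub_eq_zero]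
      exact hPZ a
  -- Cauchy-Schwarz
  have hCS : (∑ H : Fin k → (Matrix (Fin n) (Fin n) F), f H) ^ 2 ≤ E * ∑ H : Fin k → (Matrix (Fin n) (Fin n) F), (f H) ^ 2 := by
    have h1 : ∑ H : Fin k → (Matrix (Fin n) (Fin n) F), f H = ∑ H ∈ Efin, f H := by
      rw [hEfin]
      exact (Finset.sum_filter_of_ne (fun H _ hne => Nat.pos_of_ne_zero hne)).symm
    have h2 : ∑ H ∈ Efin, (f H) ^ 2 ≤ ∑ H : Fin k → (Matrix (Fin n) (Fin n) F), (f H) ^ 2 :=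
      Finset.sum_le_sum_of_subset (Finset.filter_subset _ _)
    have hcs := Finset.sum_mul_sq_le_sq_mul_sq Efin (fun _ => 1) f
    simp only [one_mul, one_pow, Finset.sum_const, smul_eq_mul, mul_one] at hcs
    calc (∑ H : Fin k → (Matrix (Fin n) (Fin n) F), f H) ^ 2 = (∑ H ∈ Efin, f H) ^ 2 := by rw [h1]
      _ ≤ Efin.card * ∑ H ∈ Efin, (f H) ^ 2 := hcs
      _ ≤ E * ∑ H : Fin k → (Matrix (Fin n) (Fin n) F), (f H) ^ 2 := by
          rw [hEdef]; exact Nat.mul_le_mul_left _ h2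
  -- master nat inequality
  have master : N * (N * Ω * Ω) ≤ N * (E * ((q - 1) * q ^ k + N) * Ω) := by
    have h1 : (N * Ω) ^ 2 ≤ E * (N * ((q - 1) * (Ω * q ^ k) + N * Ω)) := by
      calc (N * Ω) ^ 2 = ((∑ H : Fin k → (Matrix (Fin n) (Fin n) F), f H) * q ^ k) ^ 2 := by rw [hSf]
        _ = (∑ H : Fin k → (Matrix (Fin n) (Fin n) F), f H) ^ 2 * (q ^ k) ^ 2 := by ring
        _ ≤ (E * ∑ H : Fin k → (Matrix (Fin n) (Fin n) F), (f H) ^ 2) * (q ^ k) ^ 2 :=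
            Nat.mul_le_mul_right _ hCS
        _ = E * ((∑ H : Fin k → (Matrix (Fin n) (Fin n) F), (f H) ^ 2) * (q ^ k) ^ 2) := by ring
        _ ≤ E * (N * ((q - 1) * (Ω * q ^ k) + N * Ω)) := Nat.mul_le_mul_left _ hQ
    calc N * (N * Ω * Ω) = (N * Ω) ^ 2 := by ring
      _ ≤ E * (N * ((q - 1) * (Ω * q ^ k) + N * Ω)) := h1
      _ = N * (E * ((q - 1) * q ^ k + N) * Ω) := by ring
  -- conclude
  have main : N * Ω ≤ E * ((q - 1) * q ^ k + N) := by
    rcases Nat.eq_zero_or_pos N with hN0 | hNpos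
    · rw [hN0, Nat.zero_mul]; exact Nat.zero_le _
    · have hNΩpos : 0 < N * Ω := Nat.mul_pos hNpos hΩpos
      have h2 : N * Ω * (N * Ω) ≤ N * Ω * (E * ((q - 1) * q ^ k + N)) := by
        calc N * Ω * (N * Ω) = N * (N * Ω * Ω) := by ring
          _ ≤ N * (E * ((q - 1) * q ^ k + N) * Ω) := master
          _ = N * Ω * (E * ((q - 1) * q ^ k + N)) := by ring
      exact Nat.le_of_mul_le_mul_left h2 hNΩpos
  rw [hN, hE]
  exact final_real q k N Ω E hq2 hΩpos main
end

section
/- Let q be a prime power, δ ∈ [0,1], n ≥ 1, and let M ∈ F_q^{n×n} be a matrix with exactly d nonzero entries (d ≥ 0). Let H be a random n×n matrix over F_q whose entries are mutually independent, each entry taking the value 0 with probability 1−δ and each fixed nonzero value h ∈ F_q with probability δ/(q−1). Then P( ⟨M, H⟩ = 0 ) = q^{−1} + (1 − q^{−1})·( 1 − δ/(1 − q^{−1}) )^d. Consequently, if H_1, …, H_k are i.i.d. copies of H, then P( ⟨M, H_a⟩ = 0 for all a = 1,…,k ) = [ q^{−1} + (1 − q^{−1})·( 1 − δ/(1 − q^{−1})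 )^d ]^k. -/
set_option maxHeartbeats 1000000

open Classical

noncomputable def stmtW (F : Type) [Field F] [Fintype F] [DecidableEq F] (δ : ℝ) (x : F) : ℝ :=
  if x = 0 then 1 - δ else δ / ((Fintype.card F : ℝ) - 1)

open Finset in
noncomputable def stmtT (F : Type) [Field F] [Fintype F] [DecidableEq F] (δ : ℝ)
    (ι : Type) [Fintype ι] (m : ι → F) (c : F) : ℝ :=
  ∑ g : ι → F, (∏ i, stmtW F δ (g i)) * (if (∑ i, m i * g i) = c then (1 : ℝ) else 0)

open Finset in
noncomputable def stmtD (F : Type) [Field F] [DecidableEq F]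
    (ι : Type) [Fintype ι] (m : ι → F) : ℕ :=
  (univ.filter fun i => m i ≠ 0).card

noncomputable def stmtA (F : Type) [Field F] [Fintype F] [DecidableEq F] (δ : ℝ) (d : ℕ) : ℝ :=
  (Fintype.card F : ℝ)⁻¹ + (1 - (Fintype.card F : ℝ)⁻¹) *
    (1 - δ / (1 - (Fintype.card F : ℝ)⁻¹)) ^ d

noncomputable def stmtB (F : Type) [Field F] [Fintype F] [DecidableEq F] (δ : ℝ) (d : ℕ) : ℝ :=
  (Fintype.card F : ℝ)⁻¹ - (Fintype.card F : ℝ)⁻¹ *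
    (1 - δ / (1 - (Fintype.card F : ℝ)⁻¹)) ^ d

noncomputable def stmtR (F : Type) [Field F] [Fintype F] [DecidableEq F] (δ : ℝ)
    (d : ℕ) (c : F) : ℝ :=
  if c = 0 then stmtA F δ d else stmtB F δ d

lemma stmt_arith0 (Q δ R : ℝ) (hQ0 : Q ≠ 0) (hQ1 : Q - 1 ≠ 0) (hQi : 1 - Q⁻¹ ≠ 0) :
    (1 - δ) * (Q⁻¹ + (1 - Q⁻¹) * R) + δ / (Q - 1) * ((Q - 1) * (Q⁻¹ - Q⁻¹ * R))
      = Q⁻¹ + (1 - Q⁻¹) * ((1 - δ / (1 - Q⁻¹)) * R) := by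
  field_simp
  ring

lemma stmt_arith1 (Q δ R : ℝ) (hQ0 : Q ≠ 0) (hQ1 : Q - 1 ≠ 0) (hQi : 1 - Q⁻¹ ≠ 0) :
    (1 - δ) * (Q⁻¹ - Q⁻¹ * R) + δ / (Q - 1) *
        ((Q - 1) * (Q⁻¹ - Q⁻¹ * R) + ((Q⁻¹ + (1 - Q⁻¹) * R) - (Q⁻¹ - Q⁻¹ * R)))
      = Q⁻¹ - Q⁻¹ * ((1 - δ / (1 - Q⁻¹)) * R) := by
  field_simp
  ring

section aux

variable (F : Type) [Field F] [Fintype F] [DecidableEq F]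

open Finset

set_option linter.unusedSectionVars false

lemma stmt_card2 : 2 ≤ Fintype.card F := Fintype.one_lt_card

lemma stmt_Qne : ((Fintype.card F : ℝ)) ≠ 0 := by
  have := stmt_card2 F; positivity

lemma stmt_Q1ne : ((Fintype.card F : ℝ)) - 1 ≠ 0 := by
  have h := stmt_card2 F
  have : (2 : ℝ) ≤ (Fintype.card F : ℝ) := by exact_mod_cast h
  linarith

lemma stmt_Qinvne : 1 - ((Fintype.card F : ℝ))⁻¹ ≠ 0 := by
  have h := stmt_card2 F
  have h2 : (2 : ℝ) ≤ (Fintype.card F : ℝ) := by exact_mod_cast h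
  have : ((Fintype.card F : ℝ))⁻¹ < 1 := by
    rw [inv_lt_one_iff₀]; right; linarith
  linarith

lemma stmt_card_compl : ((({0} : Finset F)ᶜ).card : ℝ) = (Fintype.card F : ℝ) - 1 := by
  rw [Finset.card_compl, Finset.card_singleton]
  have h := stmt_card2 F
  rw [Nat.cast_sub (by omega)]
  norm_num

lemma stmt_sumW (δ : ℝ) : ∑ x : F, stmtW F δ x = 1 := by
  rw [Fintype.sum_eq_add_sum_compl 0]
  have h1 : stmtW F δ 0 = 1 - δ := by simp [stmtW]
  have h2 : ∑ x ∈ ({0} : Finset F)ᶜ, stmtW F δ x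
      = ∑ x ∈ ({0} : Finset F)ᶜ, δ / ((Fintype.card F : ℝ) - 1) := by
    refine Finset.sum_congr rfl fun x hx => ?_
    rw [Finset.mem_compl, Finset.mem_singleton] at hx
    simp [stmtW, hx]
  rw [h1, h2, Finset.sum_const, nsmul_eq_mul, stmt_card_compl, mul_comm,
    div_mul_cancel₀ δ (stmt_Q1ne F)]
  ring

lemma stmt_key (δ : ℝ) (ι : Type) [Fintype ι] (m : ι → F) (c : F) :
    stmtT F δ ι m c = stmtR F δ (stmtD F ι m) c := by
  revert m c
  refine Fintype.induction_empty_option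
    (P := fun α inst => ∀ (m : α → F) (c : F),
      @stmtT F _ _ _ δ α inst m c = stmtR F δ (@stmtD F _ _ α inst m) c) ?_ ?_ ?_ ι
  · -- equiv step
    intro α β instβ e h m c
    letI : Fintype α := Fintype.ofEquiv β e.symm
    have e1 : stmtT F δ β m c = stmtT F δ α (fun a => m (e a)) c := by
      unfold stmtT
      apply Finset.sum_equiv (Equiv.arrowCongr e.symm (Equiv.refl F))
      · intro g; simp
      intro g _
      have hp : (∏ b : β, stmtW F δ (g b)) = ∏ a : α, stmtW F δ (g (e a)) :=
        (Fintype.prod_equiv e (fun a => stmtW F δ (g (e a))) (fun b => stmtW F δ (g b))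
          (fun a => rfl)).symm
      have hs : (∑ b : β, m b * g b) = ∑ a : α, m (e a) * g (e a) :=
        (Fintype.sum_equiv e (fun a => m (e a) * g (e a)) (fun b => m b * g b)
          (fun a => rfl)).symm
      have harr : ∀ a : α, (Equiv.arrowCongr e.symm (Equiv.refl F)) g a = g (e a) :=
        fun a => rfl
      simp only [harr, hp, hs]
    have e2 : stmtD F β m = stmtD F α (fun a => m (e a)) := by
      unfold stmtD
      rw [Finset.card_filter, Finset.card_filter]
      exact (Fintype.sum_equiv e (fun a => if m (e a) ≠ 0 then 1 else 0)
        (fun b => if m b ≠ 0 then 1 else 0) (fun a => rfl)).symm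
    rw [e1, e2]
    exact h _ c
  · -- empty step
    intro m c
    unfold stmtT stmtD stmtR stmtA stmtB
    rcases eq_or_ne c 0 with hc | hc
    · simp [hc]
    · simp [hc, Ne.symm hc]
  · -- option step
    intro α instα h m c
    have step1 : stmtT F δ (Option α) m c
        = ∑ p : F × (α → F), (stmtW F δ p.1 * ∏ a, stmtW F δ (p.2 a)) *
            (if (m none * p.1 + ∑ a, m (some a) * p.2 a) = c then (1 : ℝ) else 0) := by
      unfold stmtT
      apply Finset.sum_equiv (Equiv.piOptionEquivProd (β := fun _ : Option α => F))
      · intro g; simp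
      intro g _
      have h1 : (∏ i : Option α, stmtW F δ (g i))
          = stmtW F δ (g none) * ∏ a, stmtW F δ (g (some a)) := Fintype.prod_option _
      have h2 : (∑ i : Option α, m i * g i)
          = m none * g none + ∑ a, m (some a) * g (some a) := Fintype.sum_option _
      have h3 : ((Equiv.piOptionEquivProd (β := fun _ : Option α => F)) g).1 = g none := rfl
      have h4 : ∀ a, ((Equiv.piOptionEquivProd (β := fun _ : Option α => F)) g).2 a
          = g (some a) := fun _ => rfl
      simp only [h1, h2, h3, h4]
    have step : stmtT F δ (Option α) m c
        = ∑ x : F, stmtW F δ x * stmtT F δ α (fun a => m (some a)) (c - m none * x) := by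
      rw [step1, Fintype.sum_prod_type (f := fun p : F × (α → F) =>
        (stmtW F δ p.1 * ∏ a, stmtW F δ (p.2 a)) *
          (if (m none * p.1 + ∑ a, m (some a) * p.2 a) = c then (1 : ℝ) else 0))]
      refine Finset.sum_congr rfl fun x _ => ?_
      unfold stmtT
      rw [Finset.mul_sum]
      refine Finset.sum_congr rfl fun g _ => ?_
      have hiff : (m none * x + ∑ a, m (some a) * g a = c)
          ↔ ((∑ a, m (some a) * g a) = c - m none * x) := by
        constructor <;> intro hh <;> linear_combination hh
      rw [if_congr hiff rfl rfl]
      ring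
    have hdd : stmtD F (Option α) m
        = (if m none ≠ 0 then 1 else 0) + stmtD F α (fun a => m (some a)) := by
      unfold stmtD
      rw [Finset.card_filter, Finset.card_filter, Fintype.sum_option]
    rcases eq_or_ne (m none) 0 with h0 | h0
    · -- m none = 0
      rw [step]
      simp only [h0, zero_mul, sub_zero]
      rw [← Finset.sum_mul, stmt_sumW, one_mul, h, hdd]
      simp [h0]
    · -- m none ≠ 0
      have hx0 : ∀ x : F, (c - m none * x = 0) ↔ (x = (m none)⁻¹ * c) := fun x => by
        rw [sub_eq_zero, eq_inv_mul_iff_mul_eq₀ h0]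
        exact eq_comm
      have hrw : ∀ y : F, stmtT F δ α (fun a => m (some a)) y
          = if y = 0 then stmtA F δ (stmtD F α (fun a => m (some a)))
            else stmtB F δ (stmtD F α (fun a => m (some a))) := fun y => h _ y
      rw [step]
      simp only [hrw]
      rw [Fintype.sum_eq_add_sum_compl (0 : F)]
      have hsum : (∑ x ∈ ({0} : Finset F)ᶜ, stmtW F δ x *
            (if c - m none * x = 0 then stmtA F δ (stmtD F α (fun a => m (some a)))
              else stmtB F δ (stmtD F α (fun a => m (some a)))))
          = δ / ((Fintype.card F : ℝ) - 1) *
            (((Fintype.card F : ℝ) - 1) * stmtB F δ (stmtD F α (fun a => m (some a))) +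
              (if c = 0 then 0 else stmtA F δ (stmtD F α (fun a => m (some a)))
                - stmtB F δ (stmtD F α (fun a => m (some a))))) := by
        have h1 : ∀ x ∈ ({0} : Finset F)ᶜ, stmtW F δ x *
              (if c - m none * x = 0 then stmtA F δ (stmtD F α (fun a => m (some a)))
                else stmtB F δ (stmtD F α (fun a => m (some a))))
            = δ / ((Fintype.card F : ℝ) - 1) *
              (stmtB F δ (stmtD F α (fun a => m (some a))) +
                (if x = (m none)⁻¹ * c then stmtA F δ (stmtD F α (fun a => m (some a)))
                  - stmtB F δ (stmtD F α (fun a => m (some a))) else 0)) := by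
          intro x hx
          rw [Finset.mem_compl, Finset.mem_singleton] at hx
          have hw : stmtW F δ x = δ / ((Fintype.card F : ℝ) - 1) := by simp [stmtW, hx]
          rw [hw]
          simp only [hx0]
          rcases eq_or_ne x ((m none)⁻¹ * c) with he | he
          · rw [if_pos he, if_pos he]; ring
          · rw [if_neg he, if_neg he]; ring
        rw [Finset.sum_congr rfl h1, ← Finset.mul_sum, Finset.sum_add_distrib, Finset.sum_const,
          Finset.sum_ite_eq' (({0} : Finset F)ᶜ) ((m none)⁻¹ * c)
            (fun _ => stmtA F δ (stmtD F α (fun a => m (some a)))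
              - stmtB F δ (stmtD F α (fun a => m (some a)))),
          nsmul_eq_mul, stmt_card_compl]
        rcases eq_or_ne c 0 with hc | hc
        · rw [if_neg (show (m none)⁻¹ * c ∉ ({0} : Finset F)ᶜ by simp [hc]), if_pos hc]
        · rw [if_pos (show (m none)⁻¹ * c ∈ ({0} : Finset F)ᶜ by simp [hc, h0]), if_neg hc]
      rw [hsum]
      have hW0 : stmtW F δ 0 = 1 - δ := by simp [stmtW]
      rw [hW0, hdd, if_pos h0]
      have hQ0 := stmt_Qne F
      have hQ1 := stmt_Q1ne F
      have hQi := stmt_Qinvne F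
      rcases eq_or_ne c 0 with hc | hc
      · subst hc
        rw [if_pos (show (0 : F) - m none * 0 = 0 by ring)]
        rw [if_pos rfl, add_zero]
        unfold stmtR
        rw [if_pos rfl]
        unfold stmtA stmtB
        rw [pow_add, pow_one]
        exact stmt_arith0 _ δ _ hQ0 hQ1 hQi
      · rw [if_neg (show ¬((c : F) - m none * 0 = 0) by simpa using hc)]
        rw [if_neg hc]
        unfold stmtR
        rw [if_neg hc]
        unfold stmtA stmtB
        rw [pow_add, pow_one]
        exact stmt_arith1 _ δ _ hQ0 hQ1 hQi

end aux

/-- Lemma 14: for a matrix `M` with exactly `d` nonzero entries and a random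
matrix `H` with i.i.d. entries equal to `0` with probability `1-δ` and to each nonzero value
with probability `δ/(q-1)`, the probability that `⟨M,H⟩ = 0` equals
`q⁻¹ + (1-q⁻¹)(1 - δ/(1-q⁻¹))^d`; for `k` i.i.d. copies the probability that all inner
products vanish is the `k`-th power of this quantity. -/
theorem stmt_12 (q n d : ℕ) (hq : IsPrimePow q) (hn : 0 < n)
    (δ : ℝ) (hδ0 : 0 ≤ δ) (hδ1 : δ ≤ 1)
    (F : Type) [Field F] [Fintype F] [DecidableEq F] (hF : Fintype.card F = q)
    (M : Matrix (Fin n) (Fin n) F)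
    (hd : (Finset.univ.filter (fun ij : Fin n × Fin n => M ij.1 ij.2 ≠ 0)).card = d)
    (k : ℕ) :
    (∑ H : Matrix (Fin n) (Fin n) F,
        (∏ i, ∏ j, (if H i j = 0 then 1 - δ else δ / ((q : ℝ) - 1))) *
        (if (∑ i, ∑ j, M i j * H i j) = 0 then (1 : ℝ) else 0))
      = (q : ℝ)⁻¹ + (1 - (q : ℝ)⁻¹) * (1 - δ / (1 - (q : ℝ)⁻¹)) ^ d ∧
    (∑ H : Fin k → Matrix (Fin n) (Fin n) F,
        (∏ a, ∏ i, ∏ j, (if H a i j = 0 then 1 - δ else δ / ((q : ℝ) - 1))) *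
        (if (∀ a, (∑ i, ∑ j, M i j * H a i j) = 0) then (1 : ℝ) else 0))
      = ((q : ℝ)⁻¹ + (1 - (q : ℝ)⁻¹) * (1 - δ / (1 - (q : ℝ)⁻¹)) ^ d) ^ k := by
  subst hF
  subst hd
  have part1 : (∑ H : Matrix (Fin n) (Fin n) F,
        (∏ i, ∏ j, (if H i j = 0 then 1 - δ else δ / ((Fintype.card F : ℝ) - 1))) *
        (if (∑ i, ∑ j, M i j * H i j) = 0 then (1 : ℝ) else 0))
      = (Fintype.card F : ℝ)⁻¹ + (1 - (Fintype.card F : ℝ)⁻¹) *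
        (1 - δ / (1 - (Fintype.card F : ℝ)⁻¹)) ^
          ((Finset.univ.filter (fun ij : Fin n × Fin n => M ij.1 ij.2 ≠ 0)).card) := by
    have hT : (∑ H : Matrix (Fin n) (Fin n) F,
          (∏ i, ∏ j, (if H i j = 0 then 1 - δ else δ / ((Fintype.card F : ℝ) - 1))) *
          (if (∑ i, ∑ j, M i j * H i j) = 0 then (1 : ℝ) else 0))
        = stmtT F δ (Fin n × Fin n) (fun ij => M ij.1 ij.2) 0 := by
      unfold stmtT
      apply Finset.sum_equiv (Equiv.curry (Fin n) (Fin n) F).symm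
      · intro H; simp; exact Finset.mem_univ _
      intro H _
      have harr : ∀ p : Fin n × Fin n, (Equiv.curry (Fin n) (Fin n) F).symm H p = H p.1 p.2 :=
        fun _ => rfl
      have h1 : (∏ p : Fin n × Fin n, stmtW F δ (H p.1 p.2)) = ∏ i, ∏ j, stmtW F δ (H i j) :=
        Fintype.prod_prod_type _
      have h2 : (∑ p : Fin n × Fin n, M p.1 p.2 * H p.1 p.2) = ∑ i, ∑ j, M i j * H i j :=
        Fintype.sum_prod_type _
      simp only [harr, h1, h2, stmtW]
      rw [Fintype.prod_prod_type (f := fun p : Fin n × Fin n =>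
        if H p.1 p.2 = 0 then 1 - δ else δ / ((Fintype.card F : ℝ) - 1))]
    rw [hT, stmt_key]
    unfold stmtR stmtA stmtD
    rw [if_pos rfl]
  refine ⟨part1, ?_⟩
  have h3 : ∀ (f : Matrix (Fin n) (Fin n) F → ℝ),
      (∑ H : Fin k → Matrix (Fin n) (Fin n) F, ∏ a, f (H a))
        = (∑ X : Matrix (Fin n) (Fin n) F, f X) ^ k := by
    intro f
    calc (∑ H : Fin k → Matrix (Fin n) (Fin n) F, ∏ a, f (H a))
        = ∑ H ∈ Fintype.piFinset
            (fun _ : Fin k => (Finset.univ : Finset (Matrix (Fin n) (Fin n) F))),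
            ∏ a, f (H a) := by rw [Fintype.piFinset_univ]
      _ = ∏ _a : Fin k, ∑ X : Matrix (Fin n) (Fin n) F, f X := (Finset.prod_univ_sum _ _).symm
      _ = (∑ X : Matrix (Fin n) (Fin n) F, f X) ^ k := by
          rw [Finset.prod_const, Finset.card_univ, Fintype.card_fin]
  have h2 : (∑ H : Fin k → Matrix (Fin n) (Fin n) F,
        (∏ a, ∏ i, ∏ j, (if H a i j = 0 then 1 - δ else δ / ((Fintype.card F : ℝ) - 1))) *
        (if (∀ a, (∑ i, ∑ j, M i j * H a i j) = 0) then (1 : ℝ) else 0))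
      = ∑ H : Fin k → Matrix (Fin n) (Fin n) F, ∏ a,
        ((∏ i, ∏ j, (if H a i j = 0 then 1 - δ else δ / ((Fintype.card F : ℝ) - 1))) *
        (if (∑ i, ∑ j, M i j * H a i j) = 0 then (1 : ℝ) else 0)) := by
    refine Finset.sum_congr rfl fun H _ => ?_
    rw [Finset.prod_mul_distrib, Finset.prod_boole]
    simp
  rw [h2, h3 (fun X => (∏ i, ∏ j, (if X i j = 0 then 1 - δ else δ / ((Fintype.card F : ℝ) - 1))) *
    (if (∑ i, ∑ j, M i j * X i j) = 0 then (1 : ℝ) else 0)), part1]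
end
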